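/- arXiv:2602.16300 — 3 statements merged into one kernel-verified Lean document; each statement's English description precedes it below -/
import Mathlib

section
/- Let G be a finite directed graph with nonnegative edge weights and let S ⊆ V(G) be the initial blue set. Let G⁺ denote the directed graph obtained from G by retaining exactly those directed edges of positive weight. Then ept_rzf(G,S) < ∞ if and only if every vertex of G is reachable from S by a directed path in G⁺. -/
open scoped ENNReal NNReal

namespace RZF

variable {V : Type*} [Fintype V] [DecidableEq V]

/-- Probability that the white vertex `x` turns blue in one round of weighted
randomized zero forcing with weights `w`, given the current blue set `B`
(`0` when the total incoming weight of `x` is `0`). -/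
noncomputable def turnProb (w : V → V → ℝ≥0) (B : Finset V) (x : V) : ℝ≥0 :=
  (∑ u ∈ B, w u x) / ∑ u, w u x

/-- One-round transition probability of the RZF Markov chain from blue set `B`
to blue set `C`: each white vertex independently turns blue with probability
`turnProb w B ·`, and blue vertices stay blue. -/
noncomputable def stepProb (w : V → V → ℝ≥0) (B C : Finset V) : ℝ≥0∞ :=
  if B ⊆ C then
    (∏ x ∈ C \ B, (turnProb w B x : ℝ≥0∞)) *
      ∏ x ∈ Cᶜ, (1 - (turnProb w B x : ℝ≥0∞))
  else 0

/-- Distribution of the blue set after `t` rounds, started from `S`. -/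
noncomputable def state (w : V → V → ℝ≥0) (S : Finset V) : ℕ → Finset V → ℝ≥0∞
  | 0 => fun C => if C = S then 1 else 0
  | t + 1 => fun C => ∑ B : Finset V, state w S t B * stepProb w B C

/-- Expected propagation time `∑ₜ P(Bₜ ≠ V(G))`; this equals `E[τ]` when the
all-blue state is reachable from `S`, and `∞` otherwise. -/
noncomputable def ept (w : V → V → ℝ≥0) (S : Finset V) : ℝ≥0∞ :=
  ∑' t : ℕ, ∑ C ∈ Finset.univ.filter (fun C : Finset V => C ≠ Finset.univ),
    state w S t C

/-- Minimum expected propagation time over singleton starting sets. -/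
noncomputable def eptMin (w : V → V → ℝ≥0) : ℝ≥0∞ :=
  ⨅ v : V, ept w {v}

/-- The weight function of an unweighted directed graph: weight `1` on each
edge and `0` otherwise, so that `turnProb` is the fraction of in-neighbors
that are blue. -/
def unweight (adj : V → V → Prop) [DecidableRel adj] : V → V → ℝ≥0 :=
  fun u v => if adj u v then 1 else 0

end RZF

/-- `reachIn adj t a b` : there is a directed path of length at most `t`
from `a` to `b` in the directed graph with adjacency relation `adj`. -/
def reachIn {V : Type*} (adj : V → V → Prop) : ℕ → V → V → Prop
  | 0, a, b => a = b
  | t + 1, a, b => reachIn adj t a b ∨ ∃ c, reachIn adj t a c ∧ adj c b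

/-! Blue sets only grow, and a vertex can only turn blue along a positive-weight edge from a blue
vertex; so if some vertex is unreachable from `S` the chain never becomes all blue and every term
of the series defining `ept` is `1`. Conversely, if every vertex is reachable, then from any blue
set containing `S` the chain follows, with positive probability, the run in which every vertex
with a positive-weight blue in-neighbour turns blue, and this run reaches `V` within `N` rounds.
A uniform lower bound `ε > 0` on that probability gives `P(Bₜ ≠ V) ≤ (1 - ε) ^ ⌊t / N⌋`, which
is summable. -/

theorem Finset.sum_superset_prod_sdiff_mul_prod_compl {V R : Type*} [Fintype V] [DecidableEq V]
    [CommSemiring R] (B : Finset V) (p q : V → R) :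
    ∑ C with B ⊆ C, (∏ x ∈ C \ B, p x) * ∏ x ∈ Cᶜ, q x = ∏ x ∈ Bᶜ, (p x + q x) := by
  rw [prod_add]
  refine sum_nbij' (· \ B) (B ∪ ·) ?_ ?_ ?_ ?_ ?_
  · intro C _
    simp [subset_iff]
  · intro A _
    simp
  · intro C hC
    exact union_sdiff_of_subset (mem_filter.mp hC).2
  · intro A hA
    exact union_sdiff_cancel_left
      (subset_compl_iff_disjoint_right.mp (mem_powerset.mp hA)).symm
  · intro C hC
    have hBC := (mem_filter.mp hC).2
    congr 2
    ext x
    simp only [mem_compl, mem_sdiff]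
    grind

theorem ENNReal.tsum_pow_div_eq (r : ℝ≥0∞) {N : ℕ} (hN : N ≠ 0) :
    ∑' t : ℕ, r ^ (t / N) = N * (1 - r)⁻¹ := by
  have : NeZero N := ⟨hN⟩
  rw [← (Nat.divModEquiv N).symm.tsum_eq, ENNReal.tsum_prod']
  have hdiv : ∀ (k : ℕ) (j : Fin N), ((Nat.divModEquiv N).symm (k, j) : ℕ) / N = k := by
    intro k j
    change (k * N + j) / N = k
    rw [Nat.add_comm, Nat.add_mul_div_right _ _ (Nat.pos_of_ne_zero hN),
      Nat.div_eq_of_lt j.isLt, Nat.zero_add]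
  simp only [hdiv, tsum_fintype, Finset.sum_const, Finset.card_univ, Fintype.card_fin,
    nsmul_eq_mul]
  rw [ENNReal.tsum_mul_left, ENNReal.tsum_geometric]

namespace RZF

open Finset

section TurnProb

variable {V : Type*} [Fintype V] (w : V → V → ℝ≥0)

theorem turnProb_le_one (B : Finset V) (x : V) : turnProb w B x ≤ 1 := by
  rcases eq_or_ne (∑ u, w u x) 0 with h | h
  · simp [turnProb, h]
  · exact (div_le_one (pos_iff_ne_zero.mpr h)).mpr (sum_le_sum_of_subset (subset_univ B))

theorem turnProb_pos_iff {B : Finset V} {x : V} :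
    0 < turnProb w B x ↔ ∃ u ∈ B, 0 < w u x := by
  constructor
  · intro h
    by_contra! hc
    have hnum : ∑ u ∈ B, w u x = 0 := sum_eq_zero fun u hu => nonpos_iff_eq_zero.mp (hc u hu)
    simp [turnProb, hnum] at h
  · rintro ⟨u, hu, hw⟩
    have hnum : 0 < ∑ u ∈ B, w u x := sum_pos' (fun _ _ => zero_le) ⟨u, hu, hw⟩
    exact div_pos hnum (hnum.trans_le (sum_le_sum_of_subset (subset_univ B)))

end TurnProb

variable {V : Type*} [Fintype V] [DecidableEq V] (w : V → V → ℝ≥0)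

section Transitions

theorem sum_stepProb (B : Finset V) : ∑ C, stepProb w B C = 1 := by
  simp only [stepProb]
  rw [← sum_filter, sum_superset_prod_sdiff_mul_prod_compl]
  exact prod_eq_one fun x _ =>
    add_tsub_cancel_of_le (ENNReal.coe_le_one_iff.mpr (turnProb_le_one w B x))

variable {w}

theorem subset_of_stepProb_ne_zero {B C : Finset V} (h : stepProb w B C ≠ 0) : B ⊆ C := by
  by_contra hc
  exact h (if_neg hc)

theorem turnProb_pos_of_stepProb_ne_zero {B C : Finset V} {x : V} (h : stepProb w B C ≠ 0)
    (hx : x ∈ C \ B) : 0 < turnProb w B x := by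
  rw [stepProb, if_pos (subset_of_stepProb_ne_zero h)] at h
  simpa [pos_iff_ne_zero] using prod_ne_zero_iff.mp (left_ne_zero_of_mul h) x hx

end Transitions

section State

theorem sum_state (S : Finset V) (t : ℕ) : ∑ C, state w S t C = 1 := by
  induction t with
  | zero => simp [state]
  | succ t ih =>
    simp only [state, sum_comm (γ := Finset V), ← mul_sum, sum_stepProb, mul_one, ih]

/-- Chapman–Kolmogorov, with `state w B k` read as the `k`-round transition kernel out of `B`. -/
theorem state_add (S : Finset V) (t k : ℕ) (C : Finset V) :
    state w S (t + k) C = ∑ B, state w S t B * state w B k C := by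
  induction k generalizing C with
  | zero => simp [state]
  | succ k ih =>
    show ∑ D, state w S (t + k) D * stepProb w D C =
      ∑ B, state w S t B * ∑ D, state w B k D * stepProb w D C
    simp only [ih, sum_mul, mul_sum, mul_assoc]
    exact sum_comm

variable {w}

theorem subset_of_state_ne_zero {S C : Finset V} {t : ℕ} (h : state w S t C ≠ 0) : S ⊆ C := by
  induction t generalizing C with
  | zero =>
    by_cases hC : C = S
    · exact hC.ge
    · simp [state, hC] at h
  | succ t ih =>
    obtain ⟨B, -, hB⟩ := exists_ne_zero_of_sum_ne_zero h
    exact (ih (left_ne_zero_of_mul hB)).trans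
      (subset_of_stepProb_ne_zero (right_ne_zero_of_mul hB))

theorem exists_reflTransGen_of_state_ne_zero {S C : Finset V} {t : ℕ} (h : state w S t C ≠ 0)
    {x : V} (hx : x ∈ C) : ∃ s ∈ S, Relation.ReflTransGen (fun a b => 0 < w a b) s x := by
  induction t generalizing C x with
  | zero =>
    by_cases hC : C = S
    · exact ⟨x, hC ▸ hx, .refl⟩
    · simp [state, hC] at h
  | succ t ih =>
    obtain ⟨B, -, hB⟩ := exists_ne_zero_of_sum_ne_zero h
    by_cases hxB : x ∈ B
    · exact ih (left_ne_zero_of_mul hB) hxB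
    · obtain ⟨u, hu, hw⟩ := (turnProb_pos_iff w).mp
        (turnProb_pos_of_stepProb_ne_zero (right_ne_zero_of_mul hB) (mem_sdiff.mpr ⟨hx, hxB⟩))
      obtain ⟨s, hs, hsu⟩ := ih (left_ne_zero_of_mul hB) hu
      exact ⟨s, hs, hsu.tail hw⟩

end State

section Pending

noncomputable def pending (S : Finset V) (t : ℕ) : ℝ≥0∞ :=
  ∑ C ∈ Finset.univ.filter (fun C : Finset V => C ≠ Finset.univ), state w S t C

theorem ept_eq_tsum_pending (S : Finset V) : ept w S = ∑' t, pending w S t := rfl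

theorem pending_add_state_univ (S : Finset V) (t : ℕ) :
    pending w S t + state w S t univ = 1 := by
  have h := sum_filter_add_sum_filter_not univ (fun C : Finset V => C ≠ univ) (state w S t)
  simp only [ne_eq, not_not, filter_eq', mem_univ, if_true, sum_singleton, sum_state] at h
  exact h

theorem pending_le_one (S : Finset V) (t : ℕ) : pending w S t ≤ 1 :=
  le_self_add.trans_eq (pending_add_state_univ w S t)

theorem pending_eq_one_sub (S : Finset V) (t : ℕ) : pending w S t = 1 - state w S t univ :=
  ENNReal.eq_sub_of_add_eq ((le_add_self.trans_eq (pending_add_state_univ w S t)).trans_lt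
    ENNReal.one_lt_top).ne (pending_add_state_univ w S t)

theorem pending_add (S : Finset V) (t k : ℕ) :
    pending w S (t + k) = ∑ B, state w S t B * pending w B k := by
  simp only [pending, state_add w S t k, mul_sum]
  exact sum_comm

theorem pending_univ (k : ℕ) : pending w univ k = 0 :=
  sum_eq_zero fun _ hC => by_contra fun h =>
    (mem_filter.mp hC).2 (univ_subset_iff.mp (subset_of_state_ne_zero h))

end Pending

variable {w}

theorem ept_eq_top_of_not_reachable {S : Finset V} {v : V}
    (hv : ¬ ∃ s ∈ S, Relation.ReflTransGen (fun a b => 0 < w a b) s v) : ept w S = ⊤ := by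
  have hstuck : ∀ t, state w S t univ = 0 := fun t =>
    by_contra fun h => hv (exists_reflTransGen_of_state_ne_zero h (mem_univ v))
  simp only [ept_eq_tsum_pending, pending_eq_one_sub, hstuck, tsub_zero]
  exact ENNReal.tsum_const_eq_top_of_ne_zero one_ne_zero

section Saturation

variable (w)

noncomputable def nextSet (B : Finset V) : Finset V :=
  B ∪ univ.filter fun x => ∃ u ∈ B, 0 < w u x

theorem mem_nextSet {B : Finset V} {x : V} :
    x ∈ nextSet w B ↔ x ∈ B ∨ ∃ u ∈ B, 0 < w u x := by
  simp [nextSet]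

theorem le_nextSet : id ≤ nextSet w := fun _ _ hx => (mem_nextSet w).mpr (.inl hx)

theorem nextSet_mono : Monotone (nextSet w) := fun _ _ hBC _ hx =>
  (mem_nextSet w).mpr <| ((mem_nextSet w).mp hx).imp (@hBC _) fun ⟨u, hu, hw⟩ => ⟨u, hBC hu, hw⟩

theorem stepProb_nextSet_pos (B : Finset V) : 0 < stepProb w B (nextSet w B) := by
  rw [pos_iff_ne_zero, stepProb, if_pos (show B ⊆ nextSet w B from le_nextSet w B)]
  refine mul_ne_zero (prod_ne_zero_iff.mpr fun x hx => ?_) (prod_ne_zero_iff.mpr fun x hx => ?_)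
  · obtain ⟨hx, hxB⟩ := mem_sdiff.mp hx
    have hpos := (turnProb_pos_iff w).mpr (((mem_nextSet w).mp hx).resolve_left hxB)
    exact ENNReal.coe_ne_zero.mpr hpos.ne'
  · have hzero : turnProb w B x = 0 := by
      rw [← nonpos_iff_eq_zero, ← not_lt, turnProb_pos_iff]
      exact fun h => mem_compl.mp hx ((mem_nextSet w).mpr (.inr h))
    simp [hzero]

theorem state_iterate_nextSet_pos (B : Finset V) (k : ℕ) :
    0 < state w B k ((nextSet w)^[k] B) := by
  induction k with
  | zero => simp [state]
  | succ k ih =>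
    rw [Function.iterate_succ_apply']
    exact (ENNReal.mul_pos ih.ne' (stepProb_nextSet_pos w _).ne').trans_le
      (single_le_sum (f := fun D => state w B k D * stepProb w D (nextSet w ((nextSet w)^[k] B)))
        (fun _ _ => zero_le) (mem_univ _))

variable {w}

theorem exists_mem_iterate_nextSet {B : Finset V} {s v : V}
    (h : Relation.ReflTransGen (fun a b => 0 < w a b) s v) (hs : s ∈ B) :
    ∃ k, v ∈ (nextSet w)^[k] B := by
  induction h with
  | refl => exact ⟨0, hs⟩
  | tail _ hbc ih =>
    obtain ⟨k, hk⟩ := ih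
    refine ⟨k + 1, ?_⟩
    rw [Function.iterate_succ_apply']
    exact (mem_nextSet w).mpr (.inr ⟨_, hk, hbc⟩)

theorem exists_iterate_nextSet_eq_univ {S : Finset V}
    (hr : ∀ v : V, ∃ s ∈ S, Relation.ReflTransGen (fun a b => 0 < w a b) s v) :
    ∃ K, (nextSet w)^[K] S = univ := by
  choose k hk using fun v => (hr v).elim fun s ⟨hs, hsv⟩ => exists_mem_iterate_nextSet hsv hs
  exact ⟨univ.sup k, eq_univ_iff_forall.mpr fun v =>
    Function.monotone_iterate_of_id_le (le_nextSet w) (le_sup (mem_univ v)) S (hk v)⟩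

theorem exists_le_state_univ {S : Finset V}
    (hr : ∀ v : V, ∃ s ∈ S, Relation.ReflTransGen (fun a b => 0 < w a b) s v) :
    ∃ N ≠ 0, ∃ ε > 0, ∀ B, S ⊆ B → ε ≤ state w B N univ := by
  obtain ⟨K, hK⟩ := exists_iterate_nextSet_eq_univ hr
  have hfull : ∀ B, S ⊆ B → (nextSet w)^[K + 1] B = univ := fun B hSB =>
    univ_subset_iff.mp <| hK ▸ (Function.monotone_iterate_of_id_le (le_nextSet w)
      K.le_succ S).trans ((nextSet_mono w).iterate (K + 1) hSB)
  obtain ⟨B₀, hB₀, hmin⟩ := exists_min_image (univ.filter (S ⊆ ·))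
    (fun B => state w B (K + 1) univ) ⟨S, by simp⟩
  refine ⟨K + 1, K.succ_ne_zero, _, ?_, fun B hSB => hmin B (by simpa using hSB)⟩
  simpa [hfull B₀ (mem_filter.mp hB₀).2] using state_iterate_nextSet_pos w B₀ (K + 1)

end Saturation

section Decay

variable {S : Finset V} {N : ℕ} {ε : ℝ≥0∞}

theorem pending_add_le (hε : ∀ B, S ⊆ B → ε ≤ state w B N univ) (t : ℕ) :
    pending w S (t + N) ≤ (1 - ε) * pending w S t := by
  rw [pending_add, ← sum_filter_add_sum_filter_not univ (fun B : Finset V => B ≠ univ)]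
  simp only [ne_eq, not_not, filter_eq', mem_univ, if_true, sum_singleton, pending_univ, mul_zero,
    add_zero]
  calc ∑ B with ¬B = univ, state w S t B * pending w B N
      ≤ ∑ B with ¬B = univ, state w S t B * (1 - ε) := sum_le_sum fun B _ => by
        rcases eq_or_ne (state w S t B) 0 with h | h
        · simp [h]
        · rw [pending_eq_one_sub]
          exact mul_le_mul_right (tsub_le_tsub_left (hε B (subset_of_state_ne_zero h)) 1) _
    _ = (1 - ε) * pending w S t := by rw [← sum_mul, mul_comm]; rfl

theorem pending_le_pow (hε : ∀ B, S ⊆ B → ε ≤ state w B N univ) (t : ℕ) :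
    pending w S t ≤ (1 - ε) ^ (t / N) := by
  have hblock : ∀ r j, pending w S (r + N * j) ≤ (1 - ε) ^ j := by
    intro r j
    induction j with
    | zero => simpa using pending_le_one w S r
    | succ j ih =>
      calc pending w S (r + N * (j + 1)) = pending w S (r + N * j + N) := by ring_nf
        _ ≤ (1 - ε) * pending w S (r + N * j) := pending_add_le hε _
        _ ≤ (1 - ε) ^ (j + 1) := by rw [pow_succ']; exact mul_le_mul_right ih _
  simpa only [Nat.mod_add_div] using hblock (t % N) (t / N)

end Decay

theorem ept_lt_top_of_reachable {S : Finset V}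
    (hr : ∀ v : V, ∃ s ∈ S, Relation.ReflTransGen (fun a b => 0 < w a b) s v) :
    ept w S < ⊤ := by
  obtain ⟨N, hN, ε, hε, hεS⟩ := exists_le_state_univ hr
  calc ept w S ≤ ∑' t : ℕ, (1 - ε) ^ (t / N) :=
        ENNReal.tsum_le_tsum (pending_le_pow hεS)
    _ = N * (1 - (1 - ε))⁻¹ := ENNReal.tsum_pow_div_eq _ hN
    _ < ⊤ := ENNReal.mul_lt_top (ENNReal.natCast_lt_top N) <| ENNReal.inv_lt_top.mpr <|
        tsub_pos_of_lt (ENNReal.sub_lt_self ENNReal.one_ne_top one_ne_zero hε.ne')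

end RZF

/-- For a finite weighted directed graph `G` (weights `w`) and
initial blue set `S`, the expected propagation time of RZF is finite iff every
vertex is reachable from `S` in the subgraph `G⁺` of positive-weight edges. -/
theorem rzf_ept_finite_iff_reachable {V : Type*} [Fintype V] [DecidableEq V]
    (w : V → V → ℝ≥0) (S : Finset V) :
    RZF.ept w S < ⊤ ↔
      ∀ v : V, ∃ s ∈ S, Relation.ReflTransGen (fun a b => 0 < w a b) s v :=
  ⟨fun hfin _ => by_contra fun hv => hfin.ne (RZF.ept_eq_top_of_not_reachable hv),
    RZF.ept_lt_top_of_reachable⟩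
end

section
/- Let G be a finite directed graph with nonnegative edge weights, let S₁ ⊆ S₂ ⊆ V(G) be two initial blue sets, let T ⊆ V(G) be any target set, and let ℓ ≥ 0. Let A(S,T,ℓ) denote the event that all vertices of T are blue after ℓ rounds of RZF started from S. Then Pr(A(S₁,T,ℓ)) ≤ Pr(A(S₂,T,ℓ)). -/
open scoped ENNReal NNReal

/-- Probability that all vertices of `T` are blue after `ℓ` rounds of RZF
started from the initial blue set `S`. -/
noncomputable def probAllBlue {V : Type*} [Fintype V] [DecidableEq V]
    (w : V → V → ℝ≥0) (S T : Finset V) (ℓ : ℕ) : ℝ≥0∞ :=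
  ∑ C ∈ Finset.univ.filter (fun C : Finset V => T ⊆ C), RZF.state w S ℓ C

namespace RZFAux
open RZF
variable {V : Type*} [Fintype V] [DecidableEq V]

lemma turnProb_le_one (w : V → V → ℝ≥0) (B : Finset V) (x : V) :
    turnProb w B x ≤ 1 := by
  unfold turnProb
  rcases eq_or_ne (∑ u, w u x) 0 with h | h
  · simp [h]
  · rw [div_le_one (zero_lt_iff.mpr h)]
    exact Finset.sum_le_sum_of_subset (Finset.subset_univ B)

lemma turnProb_mono (w : V → V → ℝ≥0) {B C : Finset V} (h : B ⊆ C) (x : V) :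
    turnProb w B x ≤ turnProb w C x := by
  unfold turnProb
  rw [div_eq_mul_inv, div_eq_mul_inv]
  exact mul_le_mul_left (Finset.sum_le_sum_of_subset h) _

lemma coe_turnProb_le_one (w : V → V → ℝ≥0) (B : Finset V) (x : V) :
    (turnProb w B x : ℝ≥0∞) ≤ 1 := by
  exact_mod_cast turnProb_le_one w B x

lemma coe_turnProb_mono (w : V → V → ℝ≥0) {B C : Finset V} (h : B ⊆ C) (x : V) :
    (turnProb w B x : ℝ≥0∞) ≤ turnProb w C x := by
  exact_mod_cast turnProb_mono w h x

/-- Per-vertex factor of the one-step distribution from `B`. -/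
noncomputable def g (w : V → V → ℝ≥0) (B : Finset V) (x : V) (b : Bool) : ℝ≥0∞ :=
  if x ∈ B then (if b then 1 else 0)
  else if b then (turnProb w B x : ℝ≥0∞) else 1 - (turnProb w B x : ℝ≥0∞)

lemma stepProb_eq_prod (w : V → V → ℝ≥0) (B D : Finset V) :
    stepProb w B D = ∏ x, g w B x (x ∈ D) := by
  unfold stepProb
  by_cases hBD : B ⊆ D
  · rw [if_pos hBD, ← Finset.prod_mul_prod_compl D (fun x => g w B x (x ∈ D)),
      ← Finset.prod_sdiff hBD (f := fun x => g w B x (x ∈ D))]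
    have h1 : ∀ x ∈ D \ B, g w B x (x ∈ D) = (turnProb w B x : ℝ≥0∞) := by
      intro x hx
      rcases Finset.mem_sdiff.mp hx with ⟨hxD, hxB⟩
      simp [g, hxB, hxD]
    have h2 : ∀ x ∈ B, g w B x (x ∈ D) = 1 := by
      intro x hx
      simp [g, hx, hBD hx]
    have h3 : ∀ x ∈ Dᶜ, g w B x (x ∈ D) = 1 - (turnProb w B x : ℝ≥0∞) := by
      intro x hx
      have hxD : x ∉ D := Finset.mem_compl.mp hx
      have hxB : x ∉ B := fun hxB => hxD (hBD hxB)
      simp [g, hxD, hxB]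
    rw [Finset.prod_congr rfl h1, Finset.prod_congr rfl h2, Finset.prod_congr rfl h3,
      Finset.prod_const_one, mul_one]
  · rw [if_neg hBD]
    obtain ⟨x, hxB, hxD⟩ := Finset.not_subset.mp hBD
    refine (Finset.prod_eq_zero (Finset.mem_univ x) ?_).symm
    simp [g, hxB, hxD]

/-- Per-vertex factor of the coupled one-step distribution from `(B, C)`. -/
noncomputable def fac (w : V → V → ℝ≥0) (B C : Finset V) (x : V) (b c : Bool) : ℝ≥0∞ :=
  if x ∈ B then (if b && c then 1 else 0)
  else if x ∈ C then
    (if c then (if b then (turnProb w B x : ℝ≥0∞) else 1 - (turnProb w B x : ℝ≥0∞)) else 0)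
  else if b then (if c then (turnProb w B x : ℝ≥0∞) else 0)
  else if c then (turnProb w C x : ℝ≥0∞) - (turnProb w B x : ℝ≥0∞)
  else 1 - (turnProb w C x : ℝ≥0∞)

noncomputable def jointStep (w : V → V → ℝ≥0) (B C : Finset V) (p : Finset V × Finset V) : ℝ≥0∞ :=
  ∏ x, fac w B C x (x ∈ p.1) (x ∈ p.2)

/-- The equivalence between `Finset V` and `V → Bool`. -/
def finsetBoolEquiv : Finset V ≃ (V → Bool) where
  toFun s x := x ∈ s
  invFun f := Finset.univ.filter fun x => f x
  left_inv s := by ext x; simp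
  right_inv f := by funext x; simp

lemma sum_prod_mem (h : V → Bool → ℝ≥0∞) :
    ∑ s : Finset V, ∏ x, h x (x ∈ s) = ∏ x, (h x true + h x false) := by
  have e1 : ∀ x : V, (h x true + h x false) = ∑ b : Bool, h x b := by
    intro x; simp [Fintype.sum_bool, add_comm]
  rw [Finset.prod_congr rfl fun x _ => e1 x, Finset.prod_univ_sum, Fintype.piFinset_univ]
  rw [← Equiv.sum_comp (finsetBoolEquiv (V := V)) (fun f : V → Bool => ∏ x, h x (f x))]
  rfl

lemma jointStep_sum_snd (w : V → V → ℝ≥0) {B C : Finset V} (hBC : B ⊆ C) (B' : Finset V) :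
    ∑ C' : Finset V, jointStep w B C (B', C') = stepProb w B B' := by
  unfold jointStep
  rw [sum_prod_mem (fun x c => fac w B C x (x ∈ B') c), stepProb_eq_prod]
  refine Finset.prod_congr rfl fun x _ => ?_
  have hle1 := coe_turnProb_le_one w C x
  have hleB1 := coe_turnProb_le_one w B x
  have hmono := coe_turnProb_mono w hBC x
  by_cases hxB : x ∈ B
  · have hxC : x ∈ C := hBC hxB
    by_cases hb : x ∈ B' <;> simp [fac, g, hxB, hxC, hb]
  · by_cases hxC : x ∈ C
    · by_cases hb : x ∈ B' <;> simp [fac, g, hxB, hxC, hb]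
    · by_cases hb : x ∈ B'
      · simp [fac, g, hxB, hxC, hb]
      · simp only [fac, g, hxB, hxC, hb]
        simp only [if_true, if_false, if_pos trivial, decide_eq_true_eq]
        simp [hb]
        rw [add_comm]; exact tsub_add_tsub_cancel hle1 hmono

lemma jointStep_sum_fst (w : V → V → ℝ≥0) {B C : Finset V} (hBC : B ⊆ C) (C' : Finset V) :
    ∑ B' : Finset V, jointStep w B C (B', C') = stepProb w C C' := by
  unfold jointStep
  rw [sum_prod_mem (fun x b => fac w B C x b (x ∈ C')), stepProb_eq_prod]
  refine Finset.prod_congr rfl fun x _ => ?_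
  have hle1 := coe_turnProb_le_one w C x
  have hleB1 := coe_turnProb_le_one w B x
  have hmono := coe_turnProb_mono w hBC x
  by_cases hxB : x ∈ B
  · have hxC : x ∈ C := hBC hxB
    by_cases hc : x ∈ C' <;> simp [fac, g, hxB, hxC, hc]
  · by_cases hxC : x ∈ C
    · by_cases hc : x ∈ C' <;> simp [fac, g, hxB, hxC, hc, add_tsub_cancel_of_le hleB1]
    · by_cases hc : x ∈ C' <;> simp [fac, g, hxB, hxC, hc, add_tsub_cancel_of_le hmono]

lemma jointStep_eq_zero (w : V → V → ℝ≥0) (B C : Finset V) {p : Finset V × Finset V}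
    (h : ¬ p.1 ⊆ p.2) : jointStep w B C p = 0 := by
  obtain ⟨x, hx1, hx2⟩ := Finset.not_subset.mp h
  refine Finset.prod_eq_zero (Finset.mem_univ x) ?_
  simp only [fac, hx1, hx2]
  split_ifs <;> simp_all

end RZFAux

namespace RZFAux2
open RZF RZFAux
variable {V : Type*} [Fintype V] [DecidableEq V]

noncomputable def jointState (w : V → V → ℝ≥0) (S₁ S₂ : Finset V) :
    ℕ → Finset V × Finset V → ℝ≥0∞
  | 0 => fun p => if p = (S₁, S₂) then 1 else 0
  | t + 1 => fun p => ∑ q : Finset V × Finset V, jointState w S₁ S₂ t q * jointStep w q.1 q.2 p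

lemma jointState_subset (w : V → V → ℝ≥0) {S₁ S₂ : Finset V} (hS : S₁ ⊆ S₂) :
    ∀ t p, jointState w S₁ S₂ t p ≠ 0 → p.1 ⊆ p.2 := by
  intro t
  induction t with
  | zero =>
    intro p hp
    by_cases h : p = (S₁, S₂)
    · subst h; exact hS
    · simp [jointState, h] at hp
  | succ t ih =>
    intro p hp
    obtain ⟨q, -, hq⟩ := Finset.exists_ne_zero_of_sum_ne_zero hp
    by_contra hc
    exact hq (by rw [jointStep_eq_zero w q.1 q.2 hc, mul_zero])

lemma jointState_fst (w : V → V → ℝ≥0) {S₁ S₂ : Finset V} (hS : S₁ ⊆ S₂) :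
    ∀ t B', ∑ C' : Finset V, jointState w S₁ S₂ t (B', C') = state w S₁ t B' := by
  intro t
  induction t with
  | zero =>
    intro B'
    by_cases hB : B' = S₁ <;> simp [jointState, state, Prod.ext_iff, hB]
  | succ t ih =>
    intro B'
    show ∑ C' : Finset V, ∑ q : Finset V × Finset V,
        jointState w S₁ S₂ t q * jointStep w q.1 q.2 (B', C') = _
    rw [Finset.sum_comm]
    have key : ∀ q : Finset V × Finset V,
        ∑ C' : Finset V, jointState w S₁ S₂ t q * jointStep w q.1 q.2 (B', C') =
          jointState w S₁ S₂ t q * stepProb w q.1 B' := by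
      intro q
      rw [← Finset.mul_sum]
      rcases eq_or_ne (jointState w S₁ S₂ t q) 0 with h0 | h0
      · rw [h0, zero_mul, zero_mul]
      · rw [jointStep_sum_snd w (jointState_subset w hS t q h0) B']
    rw [Finset.sum_congr rfl fun q _ => key q]
    show _ = ∑ B : Finset V, state w S₁ t B * stepProb w B B'
    rw [Fintype.sum_prod_type]
    refine Finset.sum_congr rfl fun B _ => ?_
    show ∑ y : Finset V, jointState w S₁ S₂ t (B, y) * stepProb w B B' = _
    rw [← Finset.sum_mul, ih B]

lemma jointState_snd (w : V → V → ℝ≥0) {S₁ S₂ : Finset V} (hS : S₁ ⊆ S₂) :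
    ∀ t C', ∑ B' : Finset V, jointState w S₁ S₂ t (B', C') = state w S₂ t C' := by
  intro t
  induction t with
  | zero =>
    intro C'
    by_cases hC : C' = S₂ <;> simp [jointState, state, Prod.ext_iff, hC]
  | succ t ih =>
    intro C'
    show ∑ B' : Finset V, ∑ q : Finset V × Finset V,
        jointState w S₁ S₂ t q * jointStep w q.1 q.2 (B', C') = _
    rw [Finset.sum_comm]
    have key : ∀ q : Finset V × Finset V,
        ∑ B' : Finset V, jointState w S₁ S₂ t q * jointStep w q.1 q.2 (B', C') =
          jointState w S₁ S₂ t q * stepProb w q.2 C' := by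
      intro q
      rw [← Finset.mul_sum]
      rcases eq_or_ne (jointState w S₁ S₂ t q) 0 with h0 | h0
      · rw [h0, zero_mul, zero_mul]
      · rw [jointStep_sum_fst w (jointState_subset w hS t q h0) C']
    rw [Finset.sum_congr rfl fun q _ => key q]
    show _ = ∑ B : Finset V, state w S₂ t B * stepProb w B C'
    rw [Fintype.sum_prod_type, Finset.sum_comm]
    refine Finset.sum_congr rfl fun Cc _ => ?_
    show ∑ B : Finset V, jointState w S₁ S₂ t (B, Cc) * stepProb w Cc C' = _
    rw [← Finset.sum_mul, ih Cc]

end RZFAux2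

open RZF RZFAux RZFAux2

/-- Enlarging the initial blue set cannot decrease the
probability that all of `T` is blue after `ℓ` rounds. -/
theorem rzf_probAllBlue_mono {V : Type*} [Fintype V] [DecidableEq V]
    (w : V → V → ℝ≥0) (S₁ S₂ T : Finset V) (h : S₁ ⊆ S₂) (ℓ : ℕ) :
    probAllBlue w S₁ T ℓ ≤ probAllBlue w S₂ T ℓ := by
  unfold probAllBlue
  rw [Finset.sum_filter, Finset.sum_filter]
  calc ∑ B' : Finset V, (if T ⊆ B' then state w S₁ ℓ B' else 0)
      = ∑ B' : Finset V, ∑ C' : Finset V,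
          (if T ⊆ B' then jointState w S₁ S₂ ℓ (B', C') else 0) := by
        refine Finset.sum_congr rfl fun B' _ => ?_
        split_ifs with hT
        · exact (jointState_fst w h ℓ B').symm
        · simp
    _ ≤ ∑ B' : Finset V, ∑ C' : Finset V,
          (if T ⊆ C' then jointState w S₁ S₂ ℓ (B', C') else 0) := by
        refine Finset.sum_le_sum fun B' _ => Finset.sum_le_sum fun C' _ => ?_
        by_cases h1 : T ⊆ B'
        · by_cases h2 : T ⊆ C'
          · simp [h1, h2]
          · have hz : jointState w S₁ S₂ ℓ (B', C') = 0 := by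
              by_contra hz
              exact h2 (h1.trans (jointState_subset w h ℓ (B', C') hz))
            simp [hz]
        · simp [h1]
    _ = ∑ C' : Finset V, (if T ⊆ C' then state w S₂ ℓ C' else 0) := by
        rw [Finset.sum_comm]
        refine Finset.sum_congr rfl fun C' _ => ?_
        split_ifs with hT
        · exact jointState_snd w h ℓ C'
        · simp
end

section
/- Let P be the bidirectional path on vertices v₁,…,v_n (n ≥ 2) in which all directed edges (v_i,v_{i+1}) and (v_{i+1},v_i), 1 ≤ i ≤ n−1, have equal positive weight, and let v be an endpoint of P. Then ept_rzf(P, v) = 2n − 3. -/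
open scoped ENNReal NNReal

/-!
Started from an endpoint, the blue set is always an initial segment `{v₀, …, v_k}` of the path:
the only white vertex with a blue in-neighbour is `v_{k+1}`, which turns blue with probability
`1/2`, or `1` when it is the far endpoint. The process is therefore a pure birth chain on
segments, so the expected number of rounds spent on segment `k` is the inverse of its advance
probability, and summing over `k = 0, …, n - 2` gives `2 (n - 2) + 1`. Reversing the path
handles the other endpoint.
-/

open Finset

theorem ENNReal.tsum_mul_tsum_eq_tsum_sum_antidiagonal (f g : ℕ → ℝ≥0∞) :
    (∑' i, f i) * ∑' j, g j = ∑' n, ∑ ij ∈ antidiagonal n, f ij.1 * g ij.2 := by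
  simp_rw [← ENNReal.tsum_mul_right, ← ENNReal.tsum_mul_left]
  rw [← ENNReal.tsum_prod (f := fun i j => f i * g j),
    ← HasAntidiagonal.sigmaAntidiagonalEquivProd.tsum_eq, ENNReal.tsum_sigma']
  refine tsum_congr fun n => ?_
  rw [tsum_fintype, ← Finset.sum_coe_sort (antidiagonal n)]
  rfl

/-- `x t` is the Cauchy product of `(x 0, u 0, u 1, …)` with `(r ^ t)`; in `ℝ≥0∞` no
convergence hypothesis is needed. -/
theorem ENNReal.tsum_eq_of_succ_eq_add_mul {x u : ℕ → ℝ≥0∞} {r : ℝ≥0∞}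
    (h : ∀ t, x (t + 1) = u t + r * x t) :
    ∑' t, x t = (x 0 + ∑' t, u t) * (1 - r)⁻¹ := by
  let v : ℕ → ℝ≥0∞ := fun | 0 => x 0 | i + 1 => u i
  have hx : ∀ t, x t = ∑ ij ∈ antidiagonal t, v ij.1 * r ^ ij.2 := by
    intro t
    induction t with
    | zero => simp [v]
    | succ t ih =>
      rw [Nat.sum_antidiagonal_succ', h, ih, mul_sum]
      simp only [pow_succ, pow_zero, mul_one, v]
      congr 1
      exact sum_congr rfl fun _ _ => by ring
  have hv : ∑' i, v i = x 0 + ∑' t, u t := tsum_eq_zero_add' ENNReal.summable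
  rw [tsum_congr hx, ← ENNReal.tsum_geometric, ← hv,
    ENNReal.tsum_mul_tsum_eq_tsum_sum_antidiagonal]

namespace RZF

variable {V : Type*} [Fintype V] {w : V → V → ℝ≥0} {B C : Finset V} {x y : V}

theorem turnProb_eq_zero_of_forall (h : ∀ u ∈ B, w u x = 0) : turnProb w B x = 0 := by
  rw [turnProb, sum_eq_zero h, zero_div]

variable [DecidableEq V]

theorem stepProb_eq_zero_of_mem_sdiff (hy : y ∈ C \ B) (h : turnProb w B y = 0) :
    stepProb w B C = 0 := by
  unfold stepProb
  split_ifs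
  · rw [prod_eq_zero hy (by rw [h, ENNReal.coe_zero]), zero_mul]
  · rfl

theorem stepProb_self_of_frontier (hx : x ∉ B)
    (hfront : ∀ y ∉ B, y ≠ x → turnProb w B y = 0) :
    stepProb w B B = 1 - turnProb w B x := by
  rw [stepProb, if_pos subset_rfl, Finset.sdiff_self, prod_empty, one_mul]
  refine prod_eq_single_of_mem x (mem_compl.2 hx) fun y hy hyx => ?_
  rw [hfront y (mem_compl.1 hy) hyx, ENNReal.coe_zero, tsub_zero]

theorem stepProb_insert_of_frontier (hx : x ∉ B)
    (hfront : ∀ y ∉ B, y ≠ x → turnProb w B y = 0) :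
    stepProb w B (insert x B) = turnProb w B x := by
  rw [stepProb, if_pos (subset_insert x B), insert_sdiff_cancel hx, prod_singleton,
    prod_eq_one, mul_one]
  intro y hy
  rw [mem_compl, mem_insert, not_or] at hy
  rw [hfront y hy.2 hy.1, ENNReal.coe_zero, tsub_zero]

section Relabel

variable {e : Equiv.Perm V}

theorem turnProb_image (hw : ∀ u v, w (e u) (e v) = w u v) :
    turnProb w (B.image e) (e x) = turnProb w B x := by
  rw [turnProb, turnProb, sum_image fun _ _ _ _ h => e.injective h,
    ← Equiv.sum_comp e fun u => w u (e x)]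
  simp only [hw]

theorem stepProb_image (hw : ∀ u v, w (e u) (e v) = w u v) :
    stepProb w (B.image e) (C.image e) = stepProb w B C := by
  have hcompl : (C.image e)ᶜ = Cᶜ.image e := by
    simp [← coe_inj, Set.image_compl_eq e.bijective]
  unfold stepProb
  simp only [image_subset_image_iff e.injective]
  split_ifs
  · rw [← image_sdiff _ _ e.injective, hcompl, prod_image fun _ _ _ _ h => e.injective h,
      prod_image fun _ _ _ _ h => e.injective h]
    simp only [turnProb_image hw]
  · rfl

theorem state_image (hw : ∀ u v, w (e u) (e v) = w u v) (S : Finset V) (t : ℕ)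
    (C : Finset V) : state w (S.image e) t (C.image e) = state w S t C := by
  induction t generalizing C with
  | zero => simp only [state, (image_injective e.injective).eq_iff]
  | succ t ih =>
    simp only [state]
    refine (Fintype.sum_equiv (Equiv.finsetCongr e) _ _ fun B => ?_).symm
    rw [Equiv.finsetCongr_apply, map_eq_image, Equiv.coe_toEmbedding, ih, stepProb_image hw]

theorem ept_image (hw : ∀ u v, w (e u) (e v) = w u v) (S : Finset V) :
    ept w (S.image e) = ept w S := by
  have himage_univ (f : Equiv.Perm V) (C : Finset V) : C.image f = univ ↔ C = univ := by
    conv_lhs => rw [← image_univ_equiv f, (image_injective f.injective).eq_iff]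
  refine tsum_congr fun t => sum_nbij' (fun C => C.image e.symm) (fun C => C.image e)
    ?_ ?_ ?_ ?_ ?_ <;> simp [image_image, ← state_image hw S t, himage_univ]

end Relabel

section Path

def pathWeight (n : ℕ) (c : ℝ≥0) (u v : Fin n) : ℝ≥0 :=
  if (u : ℕ) + 1 = (v : ℕ) ∨ (v : ℕ) + 1 = (u : ℕ) then c else 0

def initSeg (n k : ℕ) : Finset (Fin n) := univ.filter fun i => (i : ℕ) ≤ k

variable {n j k : ℕ} {c : ℝ≥0} {C : Finset (Fin n)}

theorem pathWeight_revPerm (u v : Fin n) :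
    pathWeight n c (Fin.revPerm u) (Fin.revPerm v) = pathWeight n c u v := by
  simp only [pathWeight, Fin.revPerm_apply, Fin.val_rev]
  congr 1
  have := u.isLt; have := v.isLt
  apply propext; omega

@[simp]
theorem mem_initSeg {i : Fin n} : i ∈ initSeg n k ↔ (i : ℕ) ≤ k := by simp [initSeg]

theorem initSeg_zero (hn : 0 < n) : initSeg n 0 = {⟨0, hn⟩} := by
  ext i; simp [Fin.ext_iff]

theorem initSeg_eq_univ (h : n ≤ k + 1) : initSeg n k = univ := by
  ext i; simp only [mem_initSeg, mem_univ, iff_true]; omega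

theorem initSeg_ne_univ (h : k + 1 < n) : initSeg n k ≠ univ := by
  intro h'
  have := mem_univ (⟨k + 1, h⟩ : Fin n)
  rw [← h', mem_initSeg, Fin.val_mk] at this
  omega

theorem initSeg_inj (hj : j < n) (hk : k < n) : initSeg n j = initSeg n k ↔ j = k := by
  refine ⟨fun h => le_antisymm ?_ ?_, congrArg _⟩
  · simpa [h] using (mem_initSeg (i := ⟨j, hj⟩)).2 le_rfl
  · simpa [← h] using (mem_initSeg (i := ⟨k, hk⟩)).2 le_rfl

theorem insert_initSeg (h : k + 1 < n) :
    insert ⟨k + 1, h⟩ (initSeg n k) = initSeg n (k + 1) := by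
  ext i; simp only [mem_insert, mem_initSeg, Fin.ext_iff]; omega

theorem eq_initSeg_of_subset (h₁ : initSeg n k ⊆ C) (h₂ : C ⊆ initSeg n (k + 1)) :
    C = initSeg n k ∨ C = initSeg n (k + 1) := by
  by_cases h : ∃ i ∈ C, (i : ℕ) = k + 1
  · obtain ⟨i, hi, hik⟩ := h
    refine Or.inr (h₂.antisymm fun l hl => ?_)
    rcases (mem_initSeg.1 hl).lt_or_eq with hl' | hl'
    · exact h₁ (mem_initSeg.2 (by omega))
    · exact (Fin.ext (hl'.trans hik.symm) : l = i) ▸ hi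
  · simp only [not_exists, not_and] at h
    exact Or.inl (subset_antisymm (fun l hl => mem_initSeg.2 (by
      have := mem_initSeg.1 (h₂ hl); have := h l hl; omega)) h₁)

theorem turnProb_initSeg_of_lt {x : Fin n} (hx : k + 1 < x) :
    turnProb (pathWeight n c) (initSeg n k) x = 0 :=
  turnProb_eq_zero_of_forall fun u hu => if_neg (by rw [mem_initSeg] at hu; omega)

noncomputable def advanceProb (n k : ℕ) : ℝ≥0 := if k + 2 < n then 2⁻¹ else 1

theorem turnProb_initSeg_succ (hc : c ≠ 0) (hk : k + 1 < n) :
    turnProb (pathWeight n c) (initSeg n k) ⟨k + 1, hk⟩ = advanceProb n k := by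
  have hblue : ∑ u ∈ initSeg n k, pathWeight n c u ⟨k + 1, hk⟩ = c := by
    simp only [pathWeight]
    rw [← sum_filter, show (initSeg n k).filter _ = {⟨k, by omega⟩} by
      ext; simp [Fin.ext_iff]; omega, sum_singleton]
  have hall : ∑ u, pathWeight n c u ⟨k + 1, hk⟩ = if k + 2 < n then 2 * c else c := by
    simp only [pathWeight]
    rw [← sum_filter]
    split_ifs with h
    · rw [show univ.filter _ = {⟨k, by omega⟩, ⟨k + 2, h⟩} by
        ext; simp [Fin.ext_iff]; omega, sum_pair (by simp), two_mul]
    · rw [show univ.filter _ = {⟨k, by omega⟩} by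
        ext; simp [Fin.ext_iff]; omega, sum_singleton]
  rw [turnProb, hblue, hall, advanceProb]
  split_ifs
  · exact div_mul_cancel_right₀ hc 2
  · exact div_self hc

theorem turnProb_initSeg_eq_zero_of_ne (hk : k + 1 < n) : ∀ y ∉ initSeg n k,
    y ≠ ⟨k + 1, hk⟩ → turnProb (pathWeight n c) (initSeg n k) y = 0 := by
  intro y hy hyk
  rw [mem_initSeg] at hy
  rw [Ne, Fin.ext_iff] at hyk
  exact turnProb_initSeg_of_lt (by simp only at hyk; omega)

theorem stepProb_initSeg_self (hc : c ≠ 0) (hk : k + 1 < n) :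
    stepProb (pathWeight n c) (initSeg n k) (initSeg n k) = 1 - advanceProb n k := by
  rw [stepProb_self_of_frontier (by simp) (turnProb_initSeg_eq_zero_of_ne hk),
    turnProb_initSeg_succ hc hk]

theorem stepProb_initSeg_succ (hc : c ≠ 0) (hk : k + 1 < n) :
    stepProb (pathWeight n c) (initSeg n k) (initSeg n (k + 1)) = advanceProb n k := by
  rw [← insert_initSeg hk,
    stepProb_insert_of_frontier (by simp) (turnProb_initSeg_eq_zero_of_ne hk),
    turnProb_initSeg_succ hc hk]

theorem stepProb_initSeg_eq_zero (hj : j < n) (hk : k < n) (hjk : k < j ∨ j + 1 < k) :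
    stepProb (pathWeight n c) (initSeg n j) (initSeg n k) = 0 := by
  rcases hjk with hjk | hjk
  · refine if_neg fun h => ?_
    have := h ((mem_initSeg (i := ⟨k + 1, by omega⟩)).2 (Nat.succ_le_of_lt hjk))
    rw [mem_initSeg, Fin.val_mk] at this
    omega
  · exact stepProb_eq_zero_of_mem_sdiff (y := ⟨k, hk⟩) (by simp; omega)
      (turnProb_initSeg_of_lt (by simp only; omega))

noncomputable def segProb (n : ℕ) (c : ℝ≥0) (t k : ℕ) : ℝ≥0∞ :=
  state (pathWeight n c) (initSeg n 0) t (initSeg n k)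

theorem exists_initSeg_of_state_ne_zero (hn : 0 < n) {t : ℕ}
    (h : state (pathWeight n c) (initSeg n 0) t C ≠ 0) : ∃ k < n, C = initSeg n k := by
  induction t generalizing C with
  | zero =>
    refine ⟨0, hn, ?_⟩
    by_contra hC
    exact h (if_neg hC)
  | succ t ih =>
    obtain ⟨B, -, hB⟩ := exists_ne_zero_of_sum_ne_zero h
    obtain ⟨hstate, hstep⟩ := mul_ne_zero_iff.1 hB
    obtain ⟨j, hj, rfl⟩ := ih hstate
    have hsub : initSeg n j ⊆ C := by
      by_contra hsub
      exact hstep (if_neg hsub)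
    have hsup : C ⊆ initSeg n (j + 1) := fun i hi => by
      by_contra hij
      rw [mem_initSeg, not_le] at hij
      exact hstep (stepProb_eq_zero_of_mem_sdiff (mem_sdiff.2 ⟨hi, by simp; omega⟩)
        (turnProb_initSeg_of_lt hij))
    rcases eq_initSeg_of_subset hsub hsup with hC | hC
    · exact ⟨j, hj, hC⟩
    · by_cases hjn : j + 1 < n
      · exact ⟨j + 1, hjn, hC⟩
      · rw [initSeg_eq_univ (by omega), ← initSeg_eq_univ (k := j) (by omega)] at hC
        exact ⟨j, hj, hC⟩

theorem sum_state_mul_eq_sum_segProb (hn : 0 < n) (t : ℕ) (g : Finset (Fin n) → ℝ≥0∞) :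
    ∑ C, state (pathWeight n c) (initSeg n 0) t C * g C =
      ∑ k ∈ range n, segProb n c t k * g (initSeg n k) := by
  refine Eq.trans ?_ (sum_image (f := fun C => state (pathWeight n c) (initSeg n 0) t C * g C)
    fun j hj k hk h => (initSeg_inj (mem_range.1 hj) (mem_range.1 hk)).1 h)
  refine (sum_subset (subset_univ _) fun C _ hC => ?_).symm
  by_contra h
  obtain ⟨k, hk, rfl⟩ := exists_initSeg_of_state_ne_zero hn (left_ne_zero_of_mul h)
  exact hC (mem_image_of_mem _ (mem_range.2 hk))

theorem segProb_zero (hk : k < n) : segProb n c 0 k = if k = 0 then 1 else 0 := by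
  simp only [segProb, state, initSeg_inj hk (by omega : 0 < n)]

theorem segProb_succ (hn : 0 < n) (t k : ℕ) :
    segProb n c (t + 1) k =
      ∑ j ∈ range n, segProb n c t j * stepProb (pathWeight n c) (initSeg n j) (initSeg n k) :=
  sum_state_mul_eq_sum_segProb hn t _

theorem segProb_succ_zero (hc : c ≠ 0) (hn : 1 < n) (t : ℕ) :
    segProb n c (t + 1) 0 = (1 - advanceProb n 0) * segProb n c t 0 := by
  rw [segProb_succ (by omega), sum_eq_single_of_mem 0 (mem_range.2 (by omega)) fun j hj hj0 => by
    rw [stepProb_initSeg_eq_zero (mem_range.1 hj) (by omega) (by omega), mul_zero],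
    stepProb_initSeg_self hc hn, mul_comm]

theorem segProb_succ_succ (hc : c ≠ 0) (hk : k + 2 < n) (t : ℕ) :
    segProb n c (t + 1) (k + 1) =
      advanceProb n k * segProb n c t k + (1 - advanceProb n (k + 1)) * segProb n c t (k + 1) := by
  rw [segProb_succ (by omega), sum_eq_add_of_mem k (k + 1) (mem_range.2 (by omega))
    (mem_range.2 (by omega)) (by omega) fun j hj hjk => by
      rw [stepProb_initSeg_eq_zero (mem_range.1 hj) (by omega) (by omega), mul_zero],
    stepProb_initSeg_succ hc (by omega), stepProb_initSeg_self hc (by omega), mul_comm,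
    mul_comm (segProb n c t (k + 1))]

theorem advanceProb_ne_zero : advanceProb n k ≠ 0 := by
  unfold advanceProb; split_ifs <;> norm_num

theorem advanceProb_le_one : advanceProb n k ≤ 1 := by
  unfold advanceProb; split_ifs <;> norm_num

theorem inv_advanceProb : (advanceProb n k : ℝ≥0∞)⁻¹ = if k + 2 < n then 2 else 1 := by
  unfold advanceProb; split_ifs <;> simp

theorem tsum_segProb (hc : c ≠ 0) (hk : k + 1 < n) :
    ∑' t, segProb n c t k = (advanceProb n k : ℝ≥0∞)⁻¹ := by
  have hstay (k : ℕ) : 1 - (1 - (advanceProb n k : ℝ≥0∞)) = advanceProb n k :=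
    ENNReal.sub_sub_cancel ENNReal.one_ne_top (ENNReal.coe_le_one_iff.2 advanceProb_le_one)
  induction k with
  | zero =>
    rw [ENNReal.tsum_eq_of_succ_eq_add_mul (u := fun _ => 0) fun t => by
        rw [segProb_succ_zero hc hk, zero_add],
      segProb_zero (by omega), if_pos rfl, tsum_zero, add_zero, one_mul, hstay]
  | succ k ih =>
    rw [ENNReal.tsum_eq_of_succ_eq_add_mul fun t => segProb_succ_succ hc hk t,
      segProb_zero (by omega), if_neg k.succ_ne_zero, zero_add, ENNReal.tsum_mul_left,
      ih (by omega),
      ENNReal.mul_inv_cancel (ENNReal.coe_ne_zero.2 advanceProb_ne_zero) ENNReal.coe_ne_top,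
      one_mul, hstay]

theorem sum_state_ne_univ_eq_sum_segProb (hn : 0 < n) (t : ℕ) :
    ∑ C ∈ univ.filter (fun C : Finset (Fin n) => C ≠ univ),
        state (pathWeight n c) (initSeg n 0) t C = ∑ k ∈ range (n - 1), segProb n c t k := by
  rw [sum_filter, ← sum_congr rfl fun C _ =>
      mul_boole (C ≠ univ) (state (pathWeight n c) (initSeg n 0) t C),
    sum_state_mul_eq_sum_segProb hn, ← Nat.sub_add_cancel hn, sum_range_succ,
    Nat.sub_add_cancel hn, initSeg_eq_univ (by omega), if_neg (not_not.2 rfl), mul_zero, add_zero]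
  exact sum_congr rfl fun k hk => by
    rw [if_pos (initSeg_ne_univ (by rw [mem_range] at hk; omega)), mul_one]

theorem ept_initSeg_zero (hc : c ≠ 0) (hn : 2 ≤ n) :
    ept (pathWeight n c) (initSeg n 0) = ((2 * n - 3 : ℕ) : ℝ≥0∞) := by
  rw [ept, tsum_congr fun t => sum_state_ne_univ_eq_sum_segProb (by omega) t,
    Summable.tsum_finsetSum fun k _ => ENNReal.summable, sum_congr rfl fun k hk =>
      (tsum_segProb hc (by rw [mem_range] at hk; omega)).trans inv_advanceProb]
  obtain ⟨m, rfl⟩ : ∃ m, n = m + 2 := ⟨n - 2, by omega⟩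
  rw [show m + 2 - 1 = m + 1 by omega, sum_range_succ, if_neg (lt_irrefl _),
    sum_congr rfl fun k hk => if_pos (by rw [mem_range] at hk; omega), sum_const, card_range,
    nsmul_eq_mul, show 2 * (m + 2) - 3 = m * 2 + 1 by omega]
  push_cast
  rfl

end Path

end RZF

/-- For the bidirectional path on `n ≥ 2` vertices with all
edge weights equal to a positive constant `c`, starting from either endpoint,
the expected propagation time is `2n - 3`. -/
theorem rzf_uniform_path_ept (n : ℕ) (hn : 2 ≤ n) (c : ℝ≥0) (hc : 0 < c) :
    RZF.ept (fun u v : Fin n => if (u : ℕ) + 1 = (v : ℕ) ∨ (v : ℕ) + 1 = (u : ℕ)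
        then c else 0) {(⟨0, by omega⟩ : Fin n)} = ((2 * n - 3 : ℕ) : ℝ≥0∞) ∧
    RZF.ept (fun u v : Fin n => if (u : ℕ) + 1 = (v : ℕ) ∨ (v : ℕ) + 1 = (u : ℕ)
        then c else 0) {(⟨n - 1, by omega⟩ : Fin n)} = ((2 * n - 3 : ℕ) : ℝ≥0∞) := by
  have hleft :
      RZF.ept (RZF.pathWeight n c) {⟨0, by omega⟩} = ((2 * n - 3 : ℕ) : ℝ≥0∞) := by
    rw [← RZF.initSeg_zero]
    exact RZF.ept_initSeg_zero hc.ne' hn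
  have hright :
      ({⟨n - 1, by omega⟩} : Finset (Fin n)) = image Fin.revPerm {⟨0, by omega⟩} := by
    rw [image_singleton]
    rfl
  exact ⟨hleft, by rw [hright]; exact (RZF.ept_image RZF.pathWeight_revPerm _).trans hleft⟩
end
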